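/- Let μ₀ be a probability measure on X, Q₀ on Y, ν₀ = μ₀ ⊗ Q₀, and Φ: X × Y → ℝ be ν₀-measurable with Z(y) := ∫_X exp(−Φ(u;y)) μ₀(du) > 0 for Q₀-a.e. y. Define ν(du,dy) by dν/dν₀ = exp(−Φ(u;y)). Then the conditional distribution μʸ of u given y under ν exists, satisfies μʸ ≪ μ₀, and dμʸ/dμ₀(u) = Z(y)^{−1} exp(−Φ(u;y)) for ν-a.e. y. -/

import Mathlib

open MeasureTheory ProbabilityTheory

open scoped ENNReal

/-! The posterior `μʸ` is `μ₀` reweighted by `exp(-Φ(·,y)) / Z(y)`; on the `Q₀`-null set of `y`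
where this normalisation is meaningless we take `μ₀` itself, which makes `y ↦ μʸ` a Markov kernel.
Tonelli on `μ₀ ⊗ Q₀` shows that the `y`-marginal of `ν` is `Q₀` with density `Z`, and that
`ν s = ∫ Z(y) μʸ(sʸ) dQ₀(y)`, which is the disintegration of `ν` against its marginal. -/

namespace ProbabilityTheory

variable {X Y : Type*} [MeasurableSpace X] [MeasurableSpace Y]

noncomputable def posteriorDensity (μ : Measure X) (g : X × Y → ℝ≥0∞) (y : Y) (u : X) : ℝ≥0∞ :=
  if ∫⁻ v, g (v, y) ∂μ ∈ ({0, ∞} : Set ℝ≥0∞) then 1 else g (u, y) / ∫⁻ v, g (v, y) ∂μ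

noncomputable def posteriorKernel (μ : Measure X) [SFinite μ] (g : X × Y → ℝ≥0∞) : Kernel Y X :=
  Kernel.withDensity (Kernel.const Y μ) (posteriorDensity μ g)

variable {μ : Measure X} [SFinite μ] {g : X × Y → ℝ≥0∞}

theorem measurable_posteriorDensity (hg : Measurable g) :
    Measurable (Function.uncurry (posteriorDensity μ g)) := by
  have hW : Measurable fun y => ∫⁻ v, g (v, y) ∂μ := hg.lintegral_prod_left'
  exact Measurable.ite ((hW.comp measurable_fst) ((measurableSet_singleton ∞).insert 0))
    measurable_const ((hg.comp measurable_swap).div (hW.comp measurable_fst))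

theorem posteriorKernel_apply (hg : Measurable g) (y : Y) :
    posteriorKernel μ g y = μ.withDensity (posteriorDensity μ g y) := by
  rw [posteriorKernel, Kernel.withDensity_apply _ (measurable_posteriorDensity hg),
    Kernel.const_apply]

theorem posteriorKernel_apply_of_ne {y : Y} (hg : Measurable g)
    (h0 : ∫⁻ v, g (v, y) ∂μ ≠ 0) (htop : ∫⁻ v, g (v, y) ∂μ ≠ ∞) :
    posteriorKernel μ g y = μ.withDensity fun u => g (u, y) / ∫⁻ v, g (v, y) ∂μ := by
  rw [posteriorKernel_apply hg]
  unfold posteriorDensity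
  simp [h0, htop]

theorem isMarkovKernel_posteriorKernel [IsProbabilityMeasure μ] (hg : Measurable g) :
    IsMarkovKernel (posteriorKernel μ g) := by
  refine ⟨fun y => ⟨?_⟩⟩
  rw [posteriorKernel_apply hg, withDensity_apply _ MeasurableSet.univ, Measure.restrict_univ]
  unfold posteriorDensity
  split_ifs with hW
  · simp
  · simp only [Set.mem_insert_iff, Set.mem_singleton_iff, not_or] at hW
    simp_rw [div_eq_mul_inv]
    rw [lintegral_mul_const' _ _ (ENNReal.inv_ne_top.2 hW.1)]
    exact ENNReal.mul_inv_cancel hW.1 hW.2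

theorem lintegral_mul_posteriorKernel_apply {y : Y} (hg : Measurable g)
    (htop : ∫⁻ v, g (v, y) ∂μ ≠ ∞) {t : Set X} (ht : MeasurableSet t) :
    (∫⁻ v, g (v, y) ∂μ) * posteriorKernel μ g y t = ∫⁻ u in t, g (u, y) ∂μ := by
  by_cases h0 : ∫⁻ v, g (v, y) ∂μ = 0
  · rw [h0, zero_mul, eq_comm, ← nonpos_iff_eq_zero, ← h0]
    exact setLIntegral_le_lintegral t _
  rw [posteriorKernel_apply_of_ne hg h0 htop, withDensity_apply _ ht,
    ← lintegral_const_mul' _ _ htop]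
  exact lintegral_congr fun u => ENNReal.mul_div_cancel h0 htop

variable {Q : Measure Y} [SFinite Q]

theorem withDensity_prod_apply (hg : Measurable g) {s : Set (X × Y)} (hs : MeasurableSet s) :
    (μ.prod Q).withDensity g s = ∫⁻ y, ∫⁻ u in {u | (u, y) ∈ s}, g (u, y) ∂μ ∂Q := by
  rw [withDensity_apply _ hs, ← lintegral_indicator hs, lintegral_prod_symm' _ (hg.indicator hs)]
  exact lintegral_congr fun y => lintegral_indicator (measurable_prodMk_right hs) _

theorem map_snd_withDensity_prod (hg : Measurable g) :
    ((μ.prod Q).withDensity g).map Prod.snd = Q.withDensity fun y => ∫⁻ u, g (u, y) ∂μ := by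
  ext A hA
  rw [Measure.map_apply measurable_snd hA, withDensity_prod_apply hg (measurable_snd hA),
    withDensity_apply _ hA, ← lintegral_indicator hA]
  refine lintegral_congr fun y => ?_
  by_cases hy : y ∈ A <;> simp [hy]

theorem withDensity_prod_apply_eq_lintegral_posteriorKernel [IsProbabilityMeasure μ]
    (hg : Measurable g) (hW : ∀ᵐ y ∂Q, ∫⁻ v, g (v, y) ∂μ ≠ ∞) {s : Set (X × Y)}
    (hs : MeasurableSet s) :
    (μ.prod Q).withDensity g s =
      ∫⁻ y, posteriorKernel μ g y {u | (u, y) ∈ s} ∂(((μ.prod Q).withDensity g).map Prod.snd) := by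
  have := isMarkovKernel_posteriorKernel (μ := μ) hg
  have hκs : Measurable fun y => posteriorKernel μ g y {u | (u, y) ∈ s} :=
    Kernel.measurable_kernel_prodMk_left (measurable_swap hs)
  rw [map_snd_withDensity_prod hg, lintegral_withDensity_eq_lintegral_mul _
    hg.lintegral_prod_left' hκs, withDensity_prod_apply hg hs]
  refine lintegral_congr_ae ?_
  filter_upwards [hW] with y hy
  exact (lintegral_mul_posteriorKernel_apply hg hy (measurable_prodMk_right hs)).symm

end ProbabilityTheory

theorem bayes_theorem_function_space
    (X Y : Type*) [MeasurableSpace X] [MeasurableSpace Y]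
    (μ₀ : Measure X) [IsProbabilityMeasure μ₀]
    (Q₀ : Measure Y) [IsProbabilityMeasure Q₀]
    (Φ : X × Y → ℝ) (hΦm : Measurable Φ)
    (Z : Y → ℝ) (hZ : Z = fun y => ∫ u, Real.exp (-Φ (u, y)) ∂μ₀)
    (hZpos : ∀ᵐ y ∂Q₀, 0 < Z y)
    (ν : Measure (X × Y))
    (hν : ν = (μ₀.prod Q₀).withDensity fun p => ENNReal.ofReal (Real.exp (-Φ p))) :
    ∃ μy : Kernel Y X, IsMarkovKernel μy ∧
      (∀ s : Set (X × Y), MeasurableSet s →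
        ν s = ∫⁻ y, μy y {u | (u, y) ∈ s} ∂(ν.map Prod.snd)) ∧
      (∀ᵐ y ∂(ν.map Prod.snd),
        μy y = μ₀.withDensity fun u => ENNReal.ofReal (Real.exp (-Φ (u, y)) / Z y)) := by
  set g : X × Y → ℝ≥0∞ := fun p => ENNReal.ofReal (Real.exp (-Φ p))
  have hg : Measurable g := (Real.measurable_exp.comp hΦm.neg).ennreal_ofReal
  have hW : ∀ᵐ y ∂Q₀, ∫⁻ u, g (u, y) ∂μ₀ = ENNReal.ofReal (Z y) ∧ 0 < Z y := by
    filter_upwards [hZpos] with y hy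
    subst hZ
    refine ⟨?_, hy⟩
    have hint : Integrable (fun u => Real.exp (-Φ (u, y))) μ₀ := .of_integral_ne_zero hy.ne'
    rw [ofReal_integral_eq_lintegral_ofReal hint (ae_of_all _ fun u => (Real.exp_pos _).le)]
  have hWfin : ∀ᵐ y ∂Q₀, ∫⁻ u, g (u, y) ∂μ₀ ≠ ∞ := by
    filter_upwards [hW] with y hy
    exact hy.1 ▸ ENNReal.ofReal_ne_top
  have hmarg : ν.map Prod.snd ≪ Q₀ := by
    rw [hν, map_snd_withDensity_prod hg]
    exact withDensity_absolutelyContinuous _ _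
  refine ⟨posteriorKernel μ₀ g, isMarkovKernel_posteriorKernel hg,
    fun s hs => hν ▸ withDensity_prod_apply_eq_lintegral_posteriorKernel hg hWfin hs, ?_⟩
  filter_upwards [hmarg.ae_le hW] with y ⟨hWy, hZy⟩
  rw [posteriorKernel_apply_of_ne hg (by simpa [hWy]) (hWy ▸ ENNReal.ofReal_ne_top), hWy]
  simp_rw [ENNReal.ofReal_div_of_pos hZy, g]
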